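/- arXiv:1402.2995 — 4 statements merged into one kernel-verified Lean document; each statement's English description precedes it below -/
import Mathlib

section
/- Let G be a graph with n vertices, e edges, maximum degree Δ and minimum degree δ. Then for any vertex v, d(v) + m(v) ≤ 2e/(n-1) + Δ(n-2)/(n-1) + (Δ-δ)(1 - Δ/(n-1)), where m(v) is the average degree of the neighbors of v. -/
open Matrix Polynomial Finset

noncomputable def signlessLap {V : Type*} [Fintype V] [DecidableEq V] (G : SimpleGraph V) :
    Matrix V V ℝ := by
  classical exact G.degMatrix ℝ + G.adjMatrix ℝ

noncomputable def lap {V : Type*} [Fintype V] [DecidableEq V] (G : SimpleGraph V) :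
    Matrix V V ℝ := by
  classical exact G.lapMatrix ℝ

/-- The `i`-th largest eigenvalue (1-indexed) of a real symmetric matrix. -/
noncomputable def eig {V : Type*} [Fintype V] [DecidableEq V] (M : Matrix V V ℝ) (i : ℕ) : ℝ :=
  (if h : M.IsHermitian then (Finset.univ.val.map h.eigenvalues).sort (· ≥ ·) else []).getD (i - 1) 0

/-- `G` is a star `K_{1,n-1}`: some center adjacent exactly to all other vertices. -/
def IsStar {V : Type*} (G : SimpleGraph V) : Prop :=
  ∃ c : V, ∀ u v, G.Adj u v ↔ (u ≠ v ∧ (u = c ∨ v = c))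

namespace SimpleGraph

variable {V : Type*} [Fintype V] (G : SimpleGraph V) [DecidableRel G.Adj]

theorem degree_add_two_le_card_of_not_adj {u w : V} (hne : u ≠ w) (hnadj : ¬G.Adj u w) :
    G.degree u + 2 ≤ Fintype.card V := by
  classical
  have hcompl : 0 < Gᶜ.degree u := Adj.degree_pos_left (G := Gᶜ) ⟨hne, hnadj⟩
  have := G.degree_lt_card_verts u
  rw [degree_compl] at hcompl
  omega

theorem maxDegree_add_two_le_card_add_minDegree (hV : 2 ≤ Fintype.card V) :
    G.maxDegree + 2 ≤ Fintype.card V + G.minDegree := by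
  have : Nonempty V := Fintype.card_pos_iff.mp (by omega)
  obtain ⟨u, hu⟩ := G.exists_maximal_degree_vertex
  obtain ⟨w, hw⟩ := G.exists_minimal_degree_vertex
  have hu_lt := G.degree_lt_card_verts u
  rcases Nat.eq_zero_or_pos G.minDegree with hδ | hδ
  · by_cases huw : u = w
    · subst huw; omega
    · have hnadj : ¬G.Adj u w := fun h ↦ by
        have := h.degree_pos_right; omega
      have := G.degree_add_two_le_card_of_not_adj huw hnadj
      omega
  · omega

theorem sum_degree_add_card_mul_minDegree_le [DecidableEq V] (s : Finset V) :
    ∑ u ∈ s, G.degree u + Fintype.card V * G.minDegree ≤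
      2 * #G.edgeFinset + #s * G.minDegree := by
  have hcompl : #sᶜ * G.minDegree ≤ ∑ u ∈ sᶜ, G.degree u := by
    simpa using card_nsmul_le_sum sᶜ (fun u ↦ G.degree u) G.minDegree
      fun u _ ↦ G.minDegree_le_degree u
  have hcard := card_add_card_compl s
  rw [← sum_degrees_eq_twice_card_edges, ← sum_add_sum_compl s, ← hcard, add_mul]
  omega

theorem sum_degree_neighborFinset_le (v : V) :
    ∑ u ∈ G.neighborFinset v, G.degree u ≤ G.degree v * G.maxDegree := by
  simpa using sum_le_card_nsmul (G.neighborFinset v) (fun u ↦ G.degree u) G.maxDegree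
    fun u _ ↦ G.degree_le_maxDegree u

theorem degree_add_sum_degree_neighborFinset_add_card_mul_minDegree_le [DecidableEq V] (v : V) :
    G.degree v + ∑ u ∈ G.neighborFinset v, G.degree u + Fintype.card V * G.minDegree ≤
      2 * #G.edgeFinset + (G.degree v + 1) * G.minDegree := by
  have := G.sum_degree_add_card_mul_minDegree_le (insert v (G.neighborFinset v))
  rwa [sum_insert (G.notMem_neighborFinset_self v),
    card_insert_of_notMem (G.notMem_neighborFinset_self v), card_neighborFinset_eq_degree] at this

end SimpleGraph

theorem add_div_le_of_degree_bounds {n d Δ δ M E : ℝ} (hd : 0 < d) (hdn : d + 1 ≤ n)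
    (hdΔ : d ≤ Δ) (hgap : Δ + 2 ≤ n + δ) (hM : M ≤ d * Δ)
    (hE : d + M + n * δ ≤ E + (d + 1) * δ) :
    d + M / d ≤ E / (n - 1) + (n - 2) / (n - 1) * Δ + (Δ - δ) * (1 - Δ / (n - 1)) := by
  have hn : 0 < n - 1 := by linarith
  rw [← sub_nonneg]
  have expand : E / (n - 1) + (n - 2) / (n - 1) * Δ + (Δ - δ) * (1 - Δ / (n - 1)) - (d + M / d)
      = (d * (E + (d + 1) * δ - (d + M + n * δ)) + (n - 1 - d) * (d * Δ - M)
          + d * ((Δ - d) * (n + δ - Δ - 2))) / ((n - 1) * d) := by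
    field_simp
    ring
  rw [expand]
  apply div_nonneg _ (by positivity)
  have h1 : 0 ≤ d * (E + (d + 1) * δ - (d + M + n * δ)) := mul_nonneg hd.le (by linarith)
  have h2 : 0 ≤ (n - 1 - d) * (d * Δ - M) := mul_nonneg (by linarith) (by linarith)
  have h3 : 0 ≤ d * ((Δ - d) * (n + δ - Δ - 2)) :=
    mul_nonneg hd.le (mul_nonneg (by linarith) (by linarith))
  linarith

theorem stmt6 (n : ℕ) (hn : 2 ≤ n) (G : SimpleGraph (Fin n)) [DecidableRel G.Adj]
    (v : Fin n) (hv : 0 < G.degree v) :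
    (G.degree v : ℝ) + (∑ u ∈ G.neighborFinset v, (G.degree u : ℝ)) / G.degree v ≤
      2 * G.edgeFinset.card / ((n : ℝ) - 1) + ((n : ℝ) - 2) / ((n : ℝ) - 1) * G.maxDegree +
        ((G.maxDegree : ℝ) - G.minDegree) * (1 - (G.maxDegree : ℝ) / ((n : ℝ) - 1)) := by
  have hdn : G.degree v + 1 ≤ n := by simpa using G.degree_lt_card_verts v
  have hgap := G.maxDegree_add_two_le_card_add_minDegree (by simpa using hn)
  have hsum := G.degree_add_sum_degree_neighborFinset_add_card_mul_minDegree_le v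
  have hnbr := G.sum_degree_neighborFinset_le v
  rw [Fintype.card_fin] at hgap hsum
  exact add_div_le_of_degree_bounds (by exact_mod_cast hv) (by exact_mod_cast hdn)
    (by exact_mod_cast G.degree_le_maxDegree v) (by exact_mod_cast hgap)
    (by exact_mod_cast hnbr) (by exact_mod_cast hsum)
end

section
/- For any simple graph G, the largest signless Laplacian eigenvalue satisfies q_1(G) ≤ max over vertices v of (d(v) + m(v)), where m(v) is the average degree of the neighbors of v. -/
open Matrix Polynomial Finset

/-!
For a nonnegative matrix `M` and a positive vector `s` with `M s ≤ c s` entrywise, every eigenvalue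
`μ` satisfies `|μ| ≤ c`: at an index `v` maximising `|x u| / s u` over an eigenvector `x`, the
eigen-equation gives `|μ| |x v| ≤ ∑ M v u |x u| ≤ t (M s) v ≤ c t s v = c |x v|` with `t = |x v| / s v`.
For the signless Laplacian `Q = D + A`, the weights `s v = max (d v) 1` give
`(Q s) v = d v (d v + m v)` at every non-isolated vertex and `0` at isolated ones.
-/

theorem Matrix.abs_le_of_mulVec_le_mul {V : Type*} [Fintype V] (M : Matrix V V ℝ)
    (hM : ∀ i j, 0 ≤ M i j) {s : V → ℝ} (hs : ∀ v, 0 < s v) {c : ℝ}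
    (hMs : ∀ v, (M *ᵥ s) v ≤ c * s v) {μ : ℝ} {x : V → ℝ} (hx : x ≠ 0)
    (heig : M *ᵥ x = μ • x) : |μ| ≤ c := by
  have hV : (univ : Finset V).Nonempty := by
    obtain ⟨w, -⟩ := Function.ne_iff.mp hx
    exact ⟨w, mem_univ w⟩
  obtain ⟨v, -, hv⟩ := exists_max_image univ (fun u => |x u| / s u) hV
  set t := |x v| / s v
  have hxu : ∀ u, |x u| ≤ t * s u := fun u =>
    (div_le_iff₀ (hs u)).mp (hv u (mem_univ u))
  have hxv : |x v| = t * s v := (div_mul_cancel₀ _ (hs v).ne').symm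
  have hxv_pos : 0 < |x v| := by
    obtain ⟨w, hw⟩ := Function.ne_iff.mp hx
    have : 0 < |x w| / s w := div_pos (abs_pos.mpr hw) (hs w)
    exact (div_pos_iff_of_pos_right (hs v)).mp (this.trans_le (hv w (mem_univ w)))
  have ht : 0 ≤ t := div_nonneg (abs_nonneg _) (hs v).le
  have key : |μ| * |x v| ≤ c * |x v| :=
    calc |μ| * |x v| = |∑ u, M v u * x u| := by
          rw [← abs_mul, ← smul_eq_mul, ← Pi.smul_apply, ← heig]; rfl
      _ ≤ ∑ u, M v u * |x u| := by
          refine (abs_sum_le_sum_abs _ _).trans_eq (sum_congr rfl fun u _ => ?_)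
          rw [abs_mul, abs_of_nonneg (hM v u)]
      _ ≤ ∑ u, M v u * (t * s u) :=
          sum_le_sum fun u _ => mul_le_mul_of_nonneg_left (hxu u) (hM v u)
      _ = t * (M *ᵥ s) v := by
          simp only [mulVec, dotProduct, mul_sum]
          exact sum_congr rfl fun u _ => by ring
      _ ≤ t * (c * s v) := mul_le_mul_of_nonneg_left (hMs v) ht
      _ = c * |x v| := by rw [hxv]; ring
  exact le_of_mul_le_mul_right key hxv_pos

theorem exists_eig_one_eq_eigenvalues {V : Type*} [Fintype V] [DecidableEq V] [Nonempty V]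
    {M : Matrix V V ℝ} (hM : M.IsHermitian) : ∃ i, eig M 1 = hM.eigenvalues i := by
  set l := (univ.val.map hM.eigenvalues).sort (· ≥ ·)
  have hlen : 0 < l.length := by
    rw [Multiset.length_sort, Multiset.card_map]
    simpa using Fintype.card_pos (α := V)
  have hmem : l[0] ∈ l := List.getElem_mem hlen
  rw [Multiset.mem_sort, Multiset.mem_map] at hmem
  obtain ⟨i, -, hi⟩ := hmem
  refine ⟨i, ?_⟩
  rw [eig, dif_pos hM, Nat.sub_self, List.getD_eq_getElem _ _ hlen, hi]

section SignlessLaplacian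

variable {V : Type*} [Fintype V] [DecidableEq V] (G : SimpleGraph V) [DecidableRel G.Adj]

theorem signlessLap_eq : signlessLap G = G.degMatrix ℝ + G.adjMatrix ℝ := by
  unfold signlessLap
  congr!

theorem isHermitian_signlessLap : (signlessLap G).IsHermitian := by
  rw [signlessLap_eq]
  exact (G.isHermitian_degMatrix ℝ).add (G.isHermitian_adjMatrix ℝ)

theorem signlessLap_nonneg (u v : V) : 0 ≤ signlessLap G u v := by
  rw [signlessLap_eq, Matrix.add_apply, SimpleGraph.degMatrix, diagonal_apply,
    SimpleGraph.adjMatrix_apply]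
  split_ifs <;> positivity

theorem signlessLap_mulVec_apply (s : V → ℝ) (v : V) :
    (signlessLap G *ᵥ s) v = G.degree v * s v + ∑ u ∈ G.neighborFinset v, s u := by
  rw [signlessLap_eq, add_mulVec, Pi.add_apply, SimpleGraph.degMatrix_mulVec_apply,
    SimpleGraph.adjMatrix_mulVec_apply]

noncomputable def degreeAddAvgNeighborDegree (v : V) : ℝ :=
  if G.degree v = 0 then 0
  else G.degree v + (∑ u ∈ G.neighborFinset v, (G.degree u : ℝ)) / G.degree v

theorem signlessLap_mulVec_max_degree_one (v : V) :
    (signlessLap G *ᵥ fun u => max (G.degree u : ℝ) 1) v =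
      degreeAddAvgNeighborDegree G v * max (G.degree v : ℝ) 1 := by
  rw [signlessLap_mulVec_apply, degreeAddAvgNeighborDegree]
  by_cases hv : G.degree v = 0
  · have hN : G.neighborFinset v = ∅ := by
      rwa [← card_eq_zero, G.card_neighborFinset_eq_degree]
    simp [hv, hN]
  · have hneighbor : ∀ u ∈ G.neighborFinset v, max (G.degree u : ℝ) 1 = G.degree u := by
      intro u hu
      have : 0 < G.degree u := G.degree_pos_iff_exists_adj u |>.mpr
        ⟨v, ((G.mem_neighborFinset v u).mp hu).symm⟩
      exact max_eq_left (by exact_mod_cast this)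
    have hdeg : (1 : ℝ) ≤ G.degree v := by exact_mod_cast Nat.one_le_iff_ne_zero.mpr hv
    rw [sum_congr rfl hneighbor, if_neg hv, max_eq_left hdeg]
    field_simp

end SignlessLaplacian

theorem stmt7 {V : Type*} [Fintype V] [DecidableEq V] [Nonempty V]
    (G : SimpleGraph V) [DecidableRel G.Adj] :
    eig (signlessLap G) 1 ≤ Finset.univ.sup' Finset.univ_nonempty
      (fun v => if G.degree v = 0 then (0 : ℝ)
        else (G.degree v : ℝ) + (∑ u ∈ G.neighborFinset v, (G.degree u : ℝ)) / G.degree v) := by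
  have hQ := isHermitian_signlessLap G
  obtain ⟨i, hi⟩ := exists_eig_one_eq_eigenvalues hQ
  have hs : ∀ v, (0 : ℝ) < max (G.degree v : ℝ) 1 := fun v => one_pos.trans_le (le_max_right _ _)
  have hx : ⇑(hQ.eigenvectorBasis i) ≠ 0 :=
    (WithLp.ofLp_eq_zero 2).ne.mpr (hQ.eigenvectorBasis.orthonormal.ne_zero i)
  rw [hi]
  refine (le_abs_self _).trans <| (signlessLap G).abs_le_of_mulVec_le_mul
    (signlessLap_nonneg G) hs (fun v => ?_) hx (hQ.mulVec_eigenvectorBasis i)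
  rw [signlessLap_mulVec_max_degree_one]
  exact mul_le_mul_of_nonneg_right (le_sup' (degreeAddAvgNeighborDegree G) (mem_univ v)) (hs v).le
end

section
/- Let G be a graph with a vertex partition {V_1,...,V_m} such that each submatrix Q_{ij} of Q(G) (rows indexed by V_i, columns by V_j) has each row sum at most r_{ij} with all r_{ij} ≥ 0. Then q_1(G) ≤ λ_max(R), where R = (r_{ij}). -/
open Matrix Polynomial Finset

/-! If `Q x = q x` with `x ≠ 0`, the vector `y` of blockwise maxima of `|x|` is nonnegative,
nonzero, and satisfies `|q| y ≤ R y` entrywise. For a nonnegative matrix `R` this forces a real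
eigenvalue `μ ≥ |q|`: otherwise the resolvent `(s - R)⁻¹` exists for all `s ≥ |q|`; it is
entrywise nonnegative for `s > ‖R‖` (Neumann series), nonnegativity is a closed condition and
propagates slightly to the left of any point (again a Neumann series), so it holds at `s = |q|`,
and then `y = (|q| - R)⁻¹ (|q| - R) y ≤ 0`. -/

open Filter Topology Set

theorem mul_apply_nonneg {l m n : Type*} [Fintype m] {A : Matrix l m ℝ} {B : Matrix m n ℝ}
    (hA : ∀ i j, 0 ≤ A i j) (hB : ∀ i j, 0 ≤ B i j) (i : l) (j : n) : 0 ≤ (A * B) i j :=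
  Finset.sum_nonneg fun k _ => mul_nonneg (hA i k) (hB k j)

theorem isClosed_setOf_forall_apply_nonneg {m n : Type*} :
    IsClosed {A : Matrix m n ℝ | ∀ i j, 0 ≤ A i j} := by
  simp only [Set.ofPred_forall]
  exact isClosed_iInter fun i => isClosed_iInter fun j =>
    isClosed_le continuous_const (continuous_id.matrix_elem i j)

section NonnegMatrix

variable {n : Type*} [Fintype n] [DecidableEq n]

theorem isUnit_smul_one_sub_of_notMem_spectrum {R : Matrix n n ℝ} {s : ℝ}
    (hs : s ∉ spectrum ℝ R) : IsUnit (s • 1 - R) := by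
  rwa [spectrum.notMem_iff, Algebra.algebraMap_eq_smul_one] at hs

theorem continuousOn_inv_smul_one_sub (R : Matrix n n ℝ) :
    ContinuousOn (fun s : ℝ => (s • 1 - R)⁻¹) {s | s ∉ spectrum ℝ R} := by
  intro s hs
  have hdet : (s • 1 - R).det ≠ 0 :=
    ((isUnit_iff_isUnit_det _).mp (isUnit_smul_one_sub_of_notMem_spectrum hs)).ne_zero
  have hinv : ContinuousAt Inv.inv (s • 1 - R) :=
    continuousAt_matrix_inv _ (by rw [Ring.inverse_eq_inv']; exact continuousAt_inv₀ hdet)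
  have hlin : Continuous fun s : ℝ => s • (1 : Matrix n n ℝ) - R := by fun_prop
  exact (hinv.comp (x := s) hlin.continuousAt).continuousWithinAt

section LinftyOpNorm

attribute [local instance] Matrix.linftyOpNormedRing Matrix.linftyOpNormedAlgebra

theorem bddAbove_spectrum (R : Matrix n n ℝ) : BddAbove (spectrum ℝ R) :=
  (spectrum.isCompact R).isBounded.bddAbove

theorem inv_one_sub_apply_nonneg {P : Matrix n n ℝ} (hP : ∀ i j, 0 ≤ P i j) (hP1 : ‖P‖ < 1)
    (i j : n) : 0 ≤ (1 - P)⁻¹ i j := by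
  have hsum : HasSum (fun k => P ^ k) (1 - P)⁻¹ := by
    rw [nonsing_inv_eq_ringInverse, ← geom_series_eq_inverse P hP1]
    exact (summable_geometric_of_norm_lt_one hP1).hasSum
  exact (Pi.hasSum.mp (Pi.hasSum.mp hsum i) j).nonneg fun k => pow_apply_nonneg hP k i j

theorem inv_sub_apply_nonneg {A P : Matrix n n ℝ} (hA : IsUnit A) (hAinv : ∀ i j, 0 ≤ A⁻¹ i j)
    (hP : ∀ i j, 0 ≤ P i j) (hAP : ‖A⁻¹ * P‖ < 1) (i j : n) : 0 ≤ (A - P)⁻¹ i j := by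
  have hfactor : A - P = A * (1 - A⁻¹ * P) := by
    rw [mul_sub, mul_one, ← Matrix.mul_assoc, mul_nonsing_inv _ ((isUnit_iff_isUnit_det A).mp hA),
      Matrix.one_mul]
  rw [hfactor, Matrix.mul_inv_rev]
  exact mul_apply_nonneg (inv_one_sub_apply_nonneg (mul_apply_nonneg hAinv hP) hAP) hAinv i j

theorem inv_smul_one_sub_apply_nonneg_of_norm_lt {R : Matrix n n ℝ} (hR : ∀ i j, 0 ≤ R i j)
    {s : ℝ} (hs : ‖R‖ < s) (i j : n) : 0 ≤ (s • 1 - R)⁻¹ i j := by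
  have hs0 : 0 < s := (norm_nonneg R).trans_lt hs
  have hinv : (s • 1 : Matrix n n ℝ)⁻¹ = s⁻¹ • 1 :=
    inv_eq_right_inv (by rw [smul_mul_smul_comm, Matrix.one_mul, mul_inv_cancel₀ hs0.ne', one_smul])
  refine inv_sub_apply_nonneg ?_ ?_ hR ?_ i j
  · exact (isUnit_iff_isUnit_det _).mpr (by simp [hs0.ne'])
  · intro i j
    rw [hinv]
    by_cases h : i = j <;> simp [h, hs0.le]
  · rw [hinv, Matrix.smul_mul, Matrix.one_mul, norm_smul, Real.norm_of_nonneg (inv_nonneg.2 hs0.le),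
      inv_mul_lt_iff₀ hs0, mul_one]
    exact hs

theorem eventually_nhdsLT_inv_smul_one_sub_apply_nonneg {R : Matrix n n ℝ} {s : ℝ}
    (hs : IsUnit (s • 1 - R)) (hF : ∀ i j, 0 ≤ (s • 1 - R)⁻¹ i j) :
    ∀ᶠ s' in 𝓝[<] s, ∀ i j, 0 ≤ (s' • 1 - R)⁻¹ i j := by
  set F := (s • 1 - R)⁻¹
  have hδ : 0 < (‖F‖ + 1)⁻¹ := by positivity
  filter_upwards [Ioo_mem_nhdsLT (sub_lt_self s hδ)] with s' hs' i j
  have hsplit : s' • 1 - R = (s • 1 - R) - (s - s') • 1 := by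
    rw [sub_smul]; abel
  rw [hsplit]
  refine inv_sub_apply_nonneg hs hF (fun i j => ?_) ?_ i j
  · by_cases h : i = j <;> simp [h, hs'.2.le]
  · rw [Matrix.mul_smul, Matrix.mul_one, norm_smul, Real.norm_of_nonneg (sub_nonneg.2 hs'.2.le)]
    calc (s - s') * ‖F‖ ≤ (‖F‖ + 1)⁻¹ * ‖F‖ := by
          gcongr; linarith [hs'.1]
      _ < 1 := by
          rw [inv_mul_lt_iff₀ (by positivity)]; linarith

theorem inv_smul_one_sub_apply_nonneg {R : Matrix n n ℝ} (hR : ∀ i j, 0 ≤ R i j) {t : ℝ}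
    (ht : ∀ s, t ≤ s → s ∉ spectrum ℝ R) (i j : n) : 0 ≤ (t • 1 - R)⁻¹ i j := by
  set S := {s : ℝ | ∀ i j, 0 ≤ (s • 1 - R)⁻¹ i j}
  set T := max t (‖R‖ + 1)
  have hT : T ∈ S := inv_smul_one_sub_apply_nonneg_of_norm_lt hR (by simp [T])
  have hclosed : IsClosed (S ∩ Icc t T) := by
    rw [inter_comm]
    exact ((continuousOn_inv_smul_one_sub R).mono fun s hs => ht s hs.1)
      |>.preimage_isClosed_of_isClosed isClosed_Icc isClosed_setOf_forall_apply_nonneg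
  refine IsClosed.mem_of_ge_of_forall_exists_lt hclosed hT (le_max_left _ _) (fun s hs => ?_) i j
  have hunit := isUnit_smul_one_sub_of_notMem_spectrum (ht s hs.2.1.le)
  exact ((eventually_nhdsLT_inv_smul_one_sub_apply_nonneg hunit hs.1).and
    (Ico_mem_nhdsLT hs.2.1)).exists

end LinftyOpNorm

theorem exists_mem_spectrum_ge_of_le_mulVec {R : Matrix n n ℝ} (hR : ∀ i j, 0 ≤ R i j)
    {y : n → ℝ} (hy : ∀ i, 0 ≤ y i) (hy0 : y ≠ 0) {t : ℝ} (hRy : ∀ i, t * y i ≤ (R *ᵥ y) i) :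
    ∃ μ ∈ spectrum ℝ R, t ≤ μ := by
  by_contra! h
  have ht : ∀ s, t ≤ s → s ∉ spectrum ℝ R := fun s hts hs => (h s hs).not_ge hts
  have hunit := isUnit_smul_one_sub_of_notMem_spectrum (ht t le_rfl)
  have hy_eq : y = (t • 1 - R)⁻¹ *ᵥ ((t • 1 - R) *ᵥ y) := by
    rw [mulVec_mulVec, nonsing_inv_mul _ ((isUnit_iff_isUnit_det _).mp hunit), one_mulVec]
  refine hy0 (funext fun i => le_antisymm ?_ (hy i))
  rw [hy_eq, mulVec, dotProduct]
  refine Finset.sum_nonpos fun k _ =>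
    mul_nonpos_of_nonneg_of_nonpos (inv_smul_one_sub_apply_nonneg hR ht i k) ?_
  simpa [sub_mulVec, smul_mulVec] using hRy k

theorem le_sSup_spectrum_of_le_mulVec {R : Matrix n n ℝ} (hR : ∀ i j, 0 ≤ R i j)
    {y : n → ℝ} (hy : ∀ i, 0 ≤ y i) (hy0 : y ≠ 0) {t : ℝ} (hRy : ∀ i, t * y i ≤ (R *ᵥ y) i) :
    t ≤ sSup (spectrum ℝ R) :=
  let ⟨_, hμ, htμ⟩ := exists_mem_spectrum_ge_of_le_mulVec hR hy hy0 hRy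
  htμ.trans (le_csSup (bddAbove_spectrum R) hμ)

theorem sSup_spectrum_nonneg {R : Matrix n n ℝ} (hR : ∀ i j, 0 ≤ R i j) :
    0 ≤ sSup (spectrum ℝ R) := by
  rcases isEmpty_or_nonempty n with hn | hn
  · rw [spectrum.of_subsingleton, Real.sSup_empty]
  · refine le_sSup_spectrum_of_le_mulVec hR (y := 1) (fun _ => zero_le_one)
      one_ne_zero fun i => ?_
    rw [zero_mul, mulVec, dotProduct]
    exact Finset.sum_nonneg fun j _ => mul_nonneg (hR i j) zero_le_one

end NonnegMatrix

theorem sum_le_sum_sum_of_forall_exists_mem {V ι : Type*} [Fintype V] [Fintype ι] [DecidableEq ι]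
    {g : V → ℝ} (hg : ∀ u, 0 ≤ g u) {Vs : ι → Finset V} (hcover : ∀ v, ∃ i, v ∈ Vs i) :
    ∑ u, g u ≤ ∑ i, ∑ u ∈ Vs i, g u := by
  choose f hf using hcover
  rw [← Finset.sum_fiberwise Finset.univ f g]
  refine Finset.sum_le_sum fun i _ => Finset.sum_le_sum_of_subset_of_nonneg ?_ fun u _ _ => hg u
  intro u hu
  rw [(Finset.mem_filter.mp hu).2.symm]
  exact hf u

theorem abs_le_sSup_spectrum_of_blockRowSum_le {V ι : Type*} [Fintype V] [Fintype ι]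
    [DecidableEq ι] {Q : Matrix V V ℝ} (hQ : ∀ u v, 0 ≤ Q u v) {Vs : ι → Finset V}
    (hcover : ∀ v, ∃ i, v ∈ Vs i) {R : Matrix ι ι ℝ} (hR : ∀ i j, 0 ≤ R i j)
    (hrow : ∀ i j, ∀ v ∈ Vs i, ∑ u ∈ Vs j, Q v u ≤ R i j)
    {x : V → ℝ} (hx0 : x ≠ 0) {q : ℝ} (hx : Q *ᵥ x = q • x) :
    |q| ≤ sSup (spectrum ℝ R) := by
  set y : ι → ℝ := fun j => ⨆ u : Vs j, |x u|
  have hy : ∀ j, 0 ≤ y j := fun j => Real.iSup_nonneg fun _ => abs_nonneg _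
  have hxy : ∀ j, ∀ u ∈ Vs j, |x u| ≤ y j := fun j u hu =>
    le_ciSup (f := fun u : Vs j => |x u|) (Set.finite_range _).bddAbove ⟨u, hu⟩
  have hy0 : y ≠ 0 := by
    obtain ⟨u, hu⟩ := Function.ne_iff.mp hx0
    obtain ⟨j, hj⟩ := hcover u
    exact Function.ne_iff.mpr ⟨j, ((abs_pos.mpr hu).trans_le (hxy j u hj)).ne'⟩
  refine le_sSup_spectrum_of_le_mulVec hR hy hy0 fun i => ?_
  have hRy : 0 ≤ (R *ᵥ y) i := Finset.sum_nonneg fun j _ => mul_nonneg (hR i j) (hy j)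
  rw [Real.mul_iSup_of_nonneg (abs_nonneg q)]
  refine Real.iSup_le (fun ⟨v, hv⟩ => ?_) hRy
  calc |q| * |x v| = |∑ u, Q v u * x u| := by
        rw [← abs_mul, ← smul_eq_mul, ← Pi.smul_apply, ← hx, mulVec, dotProduct]
    _ ≤ ∑ u, Q v u * |x u| := by
        refine (Finset.abs_sum_le_sum_abs _ _).trans_eq (Finset.sum_congr rfl fun u _ => ?_)
        rw [abs_mul, abs_of_nonneg (hQ v u)]
    _ ≤ ∑ j, ∑ u ∈ Vs j, Q v u * |x u| :=
        sum_le_sum_sum_of_forall_exists_mem (fun u => mul_nonneg (hQ v u) (abs_nonneg _)) hcover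
    _ ≤ ∑ j, (∑ u ∈ Vs j, Q v u) * y j := by
        refine Finset.sum_le_sum fun j _ => ?_
        rw [Finset.sum_mul]
        exact Finset.sum_le_sum fun u hu => mul_le_mul_of_nonneg_left (hxy j u hu) (hQ v u)
    _ ≤ (R *ᵥ y) i :=
        Finset.sum_le_sum fun j _ => mul_le_mul_of_nonneg_right (hrow i j v hv) (hy j)

theorem eig_of_isEmpty {V : Type*} [Fintype V] [DecidableEq V] [IsEmpty V] (M : Matrix V V ℝ)
    (k : ℕ) : eig M k = 0 := by
  unfold eig
  split <;> simp

theorem Matrix.IsHermitian.exists_eigenvalues_eq_eig {V : Type*} [Fintype V] [DecidableEq V]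
    {M : Matrix V V ℝ} (hM : M.IsHermitian) {k : ℕ} (hk : k - 1 < Fintype.card V) :
    ∃ i, hM.eigenvalues i = eig M k := by
  set L := (Finset.univ.val.map hM.eigenvalues).sort (· ≥ ·)
  have hlen : k - 1 < L.length := by simpa [L] using hk
  have hmem : eig M k ∈ L := by
    rw [eig, dif_pos hM, List.getD_eq_getElem _ _ hlen]
    exact List.getElem_mem hlen
  simpa [L] using hmem

theorem Matrix.IsHermitian.exists_mulVec_eq_eig {V : Type*} [Fintype V] [DecidableEq V]
    [Nonempty V] {M : Matrix V V ℝ} (hM : M.IsHermitian) :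
    ∃ x : V → ℝ, x ≠ 0 ∧ M *ᵥ x = eig M 1 • x := by
  obtain ⟨i, hi⟩ := hM.exists_eigenvalues_eq_eig (k := 1) (by simp [Fintype.card_pos])
  refine ⟨hM.eigenvectorBasis i, fun h => hM.eigenvectorBasis.orthonormal.ne_zero i ?_, ?_⟩
  · ext v; exact congrFun h v
  · rw [hM.mulVec_eigenvectorBasis i, hi]

theorem signlessLap_apply_nonneg {V : Type*} [Fintype V] [DecidableEq V] (G : SimpleGraph V)
    (u v : V) : 0 ≤ signlessLap G u v := by
  classical
  unfold signlessLap
  by_cases h : u = v <;> simp [SimpleGraph.degMatrix, SimpleGraph.adjMatrix_apply, h, apply_ite]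

theorem isHermitian_signlessLap_s9 {V : Type*} [Fintype V] [DecidableEq V] (G : SimpleGraph V) :
    (signlessLap G).IsHermitian := by
  classical
  exact (G.isHermitian_degMatrix ℝ).add (G.isHermitian_adjMatrix ℝ)

theorem stmt9_general {V : Type*} [Fintype V] [DecidableEq V] (G : SimpleGraph V) (m : ℕ)
    (Vs : Fin m → Finset V) (hpart : ∀ v : V, ∃! i, v ∈ Vs i)
    (R : Matrix (Fin m) (Fin m) ℝ) (hR : ∀ i j, 0 ≤ R i j)
    (hrow : ∀ i j, ∀ v ∈ Vs i, ∑ u ∈ Vs j, signlessLap G v u ≤ R i j) :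
    eig (signlessLap G) 1 ≤ sSup (spectrum ℝ R) := by
  rcases isEmpty_or_nonempty V with hV | hV
  · rw [eig_of_isEmpty]
    exact sSup_spectrum_nonneg hR
  · obtain ⟨x, hx0, hx⟩ := (isHermitian_signlessLap_s9 G).exists_mulVec_eq_eig
    exact (le_abs_self _).trans <| abs_le_sSup_spectrum_of_blockRowSum_le
      (signlessLap_apply_nonneg G) (fun v => (hpart v).exists) hR hrow hx0 hx

theorem stmt9 {V : Type*} [Fintype V] [DecidableEq V] (G : SimpleGraph V) (m : ℕ)
    (Vs : Fin m → Finset V) (hpart : ∀ v : V, ∃! i, v ∈ Vs i) (hne : ∀ i, (Vs i).Nonempty)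
    (R : Matrix (Fin m) (Fin m) ℝ) (hR : ∀ i j, 0 ≤ R i j)
    (hrow : ∀ i j, ∀ v ∈ Vs i, ∑ u ∈ Vs j, signlessLap G v u ≤ R i j) :
    eig (signlessLap G) 1 ≤ sSup (spectrum ℝ R) :=
  stmt9_general G m Vs hpart R hR hrow
end

section
/- Let G be a bipartite graph with n vertices, e edges, and bipartition (X,Y) with |X| ≤ |Y|. Then the largest Laplacian eigenvalue satisfies μ_1(G) ≤ |Y| + e/|Y|. -/
open Matrix Polynomial Finset

/-!
Let `(μ, x)` be a Laplacian eigenpair with `μ ≠ 0`. Then `x` vanishes at isolated vertices, so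
`x = D y` with `y u = x u / d u`. At a vertex `v` maximising `|y|` the eigen-equation
`μ x v = d v x v - ∑_{w ∼ v} x w` gives `|μ| d v ≤ d v ^ 2 + ∑_{w ∼ v} d w`.
If `G` is bipartite with parts `X`, `Y` and `|X| ≤ |Y|`, every degree is at most `|Y|`, and the
neighbours of `v` lie in a single part, whose degree sum is `e`. Hence `∑_{w ∼ v} d w` is at most
both `d v |Y|` and `e`, and `d + s / d ≤ |Y| + e / |Y|` is elementary.
-/

open SimpleGraph

theorem lap_eq_lapMatrix {V : Type*} [Fintype V] [DecidableEq V] (G : SimpleGraph V)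
    [DecidableRel G.Adj] : lap G = G.lapMatrix ℝ := by
  unfold lap
  congr!

theorem eig_eq_zero_or_exists_eigenvalues {V : Type*} [Fintype V] [DecidableEq V]
    {M : Matrix V V ℝ} (hM : M.IsHermitian) (k : ℕ) :
    eig M k = 0 ∨ ∃ i, eig M k = hM.eigenvalues i := by
  unfold eig
  rw [dif_pos hM]
  set l := (univ.val.map hM.eigenvalues).sort (· ≥ ·)
  rcases lt_or_ge (k - 1) l.length with hk | hk
  · right
    rw [List.getD_eq_getElem l 0 hk]
    obtain ⟨i, -, hi⟩ := Multiset.mem_map.mp ((Multiset.mem_sort _).mp (List.getElem_mem hk))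
    exact ⟨i, hi.symm⟩
  · exact Or.inl (List.getD_eq_default l 0 hk)

theorem add_div_le_add_div_of_le {a b s e : ℝ} (ha : 0 < a) (hab : a ≤ b) (hsab : s ≤ a * b)
    (hse : s ≤ e) : a + s / a ≤ b + e / b := by
  have hb : 0 < b := ha.trans_le hab
  rw [add_div' _ _ _ ha.ne', add_div' _ _ _ hb.ne', div_le_div_iff₀ ha hb]
  nlinarith [mul_nonneg (sub_nonneg.mpr hab) (sub_nonneg.mpr hsab),
    mul_nonneg ha.le (sub_nonneg.mpr hse)]

namespace SimpleGraph

variable {V : Type*} [Fintype V] {G : SimpleGraph V} [DecidableRel G.Adj]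

theorem exists_abs_le_degree_add_sum_degree_div [DecidableEq V] {μ : ℝ} {x : V → ℝ}
    (hx : G.lapMatrix ℝ *ᵥ x = μ • x) (hx0 : x ≠ 0) (hμ : μ ≠ 0) :
    ∃ v, 0 < G.degree v ∧
      |μ| ≤ G.degree v + (∑ w ∈ G.neighborFinset v, (G.degree w : ℝ)) / G.degree v := by
  have heq (u : V) : μ * x u = G.degree u * x u - ∑ w ∈ G.neighborFinset u, x w := by
    simpa [lapMatrix_mulVec_apply] using (congrFun hx u).symm
  have hiso (u : V) (hu : G.degree u = 0) : x u = 0 := by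
    simpa [hu, card_eq_zero.mp hu, hμ] using heq u
  set y : V → ℝ := fun u => x u / G.degree u
  have hxy (u : V) : x u = G.degree u * y u := by
    by_cases hu : G.degree u = 0
    · simp [hu, hiso u hu]
    · have : (G.degree u : ℝ) ≠ 0 := by exact_mod_cast hu
      simp only [y]
      field_simp
  obtain ⟨u, hu⟩ : ∃ u, x u ≠ 0 := by
    by_contra! h
    exact hx0 (funext h)
  obtain ⟨v, -, hv⟩ := exists_max_image univ (fun u => |y u|) ⟨u, mem_univ u⟩
  have hyv : 0 < |y v| :=
    (abs_pos.mpr fun h => hu (by rw [hxy u, h, mul_zero])).trans_le (hv u (mem_univ u))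
  have hdv : 0 < G.degree v := Nat.pos_of_ne_zero fun h => by simp [y, h] at hyv
  have hd : (0 : ℝ) < G.degree v := by exact_mod_cast hdv
  refine ⟨v, hdv, ?_⟩
  rw [add_div' _ _ _ hd.ne', le_div_iff₀ hd]
  refine le_of_mul_le_mul_right ?_ hyv
  calc |μ| * G.degree v * |y v| = |μ * x v| := by
        rw [hxy v, abs_mul, abs_mul, abs_of_pos hd]; ring
    _ = |G.degree v * x v - ∑ w ∈ G.neighborFinset v, x w| := by rw [heq v]
    _ ≤ |G.degree v * x v| + |∑ w ∈ G.neighborFinset v, x w| := abs_sub _ _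
    _ ≤ G.degree v * (G.degree v * |y v|) + ∑ w ∈ G.neighborFinset v, G.degree w * |y v| := by
      gcongr ?_ + ?_
      · rw [hxy v, abs_mul, abs_mul, abs_of_pos hd]
      · refine (abs_sum_le_sum_abs _ _).trans (sum_le_sum fun w _ => ?_)
        rw [hxy w, abs_mul, Nat.abs_cast]
        exact mul_le_mul_of_nonneg_left (hv w (mem_univ w)) (Nat.cast_nonneg _)
    _ = (G.degree v * G.degree v + ∑ w ∈ G.neighborFinset v, (G.degree w : ℝ)) * |y v| := by
      rw [add_mul, sum_mul]; ring

namespace IsBipartiteWith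

variable {X Y : Finset V}

theorem neighborFinset_eq_empty_of_notMem (h : G.IsBipartiteWith X Y) {u : V} (hX : u ∉ X)
    (hY : u ∉ Y) : G.neighborFinset u = ∅ :=
  eq_empty_of_forall_notMem fun w hw => by
    rcases h.mem_of_adj ((mem_neighborFinset G u w).mp hw) with ⟨hu, -⟩ | ⟨hu, -⟩
    exacts [hX hu, hY hu]

theorem degree_le_card_right (h : G.IsBipartiteWith X Y) (hXY : #X ≤ #Y) (u : V) :
    G.degree u ≤ #Y := by
  by_cases hX : u ∈ X
  · exact isBipartiteWith_degree_le h hX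
  by_cases hY : u ∈ Y
  · exact (isBipartiteWith_degree_le' h hY).trans hXY
  simp [← card_neighborFinset_eq_degree, h.neighborFinset_eq_empty_of_notMem hX hY]

theorem sum_degree_neighborFinset_le_card_edgeFinset [DecidableEq V] (h : G.IsBipartiteWith X Y)
    (v : V) :
    ∑ w ∈ G.neighborFinset v, G.degree w ≤ #G.edgeFinset := by
  by_cases hX : v ∈ X
  · exact (sum_le_sum_of_subset (isBipartiteWith_neighborFinset_subset h hX)).trans_eq
      (isBipartiteWith_sum_degrees_eq_card_edges' h)
  by_cases hY : v ∈ Y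
  · exact (sum_le_sum_of_subset (isBipartiteWith_neighborFinset_subset' h hY)).trans_eq
      (isBipartiteWith_sum_degrees_eq_card_edges h)
  simp [h.neighborFinset_eq_empty_of_notMem hX hY]

theorem degree_add_sum_degree_div_le [DecidableEq V] (h : G.IsBipartiteWith X Y) (hXY : #X ≤ #Y)
    {v : V} (hv : 0 < G.degree v) :
    G.degree v + (∑ w ∈ G.neighborFinset v, (G.degree w : ℝ)) / G.degree v ≤
      #Y + (#G.edgeFinset : ℝ) / #Y := by
  have hdeg := h.degree_le_card_right hXY
  have hsum_le_mul : ∑ w ∈ G.neighborFinset v, G.degree w ≤ G.degree v * #Y := by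
    simpa using sum_le_card_nsmul (G.neighborFinset v) _ _ fun w _ => hdeg w
  rw [← Nat.cast_sum]
  exact add_div_le_add_div_of_le (by exact_mod_cast hv) (by exact_mod_cast hdeg v)
    (by exact_mod_cast hsum_le_mul)
    (by exact_mod_cast h.sum_degree_neighborFinset_le_card_edgeFinset v)

end IsBipartiteWith

end SimpleGraph

theorem stmt11_general (n : ℕ) (G : SimpleGraph (Fin n)) [DecidableRel G.Adj]
    (X Y : Finset (Fin n)) (hdisj : Disjoint X Y)
    (hbip : ∀ u v, G.Adj u v → ((u ∈ X ∧ v ∈ Y) ∨ (u ∈ Y ∧ v ∈ X)))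
    (hXY : X.card ≤ Y.card) :
    eig (lap G) 1 ≤ (Y.card : ℝ) + (G.edgeFinset.card : ℝ) / Y.card := by
  have hG : G.IsBipartiteWith X Y :=
    ⟨disjoint_coe.mpr hdisj, fun u v huv => by simpa using hbip u v huv⟩
  have hL := G.isHermitian_lapMatrix ℝ
  rw [lap_eq_lapMatrix]
  rcases eig_eq_zero_or_exists_eigenvalues hL 1 with h0 | ⟨i, hi⟩
  · rw [h0]; positivity
  rcases eq_or_ne (hL.eigenvalues i) 0 with hμ | hμ
  · rw [hi, hμ]; positivity
  have hx0 : (hL.eigenvectorBasis i).ofLp ≠ 0 := by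
    simpa using hL.eigenvectorBasis.orthonormal.ne_zero i
  obtain ⟨v, hv, hμv⟩ :=
    exists_abs_le_degree_add_sum_degree_div (hL.mulVec_eigenvectorBasis i) hx0 hμ
  rw [hi]
  exact (le_abs_self _).trans (hμv.trans (hG.degree_add_sum_degree_div_le hXY hv))

theorem stmt11 (n : ℕ) (G : SimpleGraph (Fin n)) [DecidableRel G.Adj]
    (X Y : Finset (Fin n)) (hdisj : Disjoint X Y) (hcover : X ∪ Y = Finset.univ)
    (hbip : ∀ u v, G.Adj u v → ((u ∈ X ∧ v ∈ Y) ∨ (u ∈ Y ∧ v ∈ X)))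
    (hXY : X.card ≤ Y.card) :
    eig (lap G) 1 ≤ (Y.card : ℝ) + (G.edgeFinset.card : ℝ) / Y.card :=
  stmt11_general n G X Y hdisj hbip hXY
end
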